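/- arXiv:2210.17006 — 3 statements merged into one kernel-verified Lean document; each statement's English description precedes it below -/
import Mathlib

section
/- Let m ≥ 1 be an integer and let H be any graph on m vertices. Then the join G = H + K̄_{m+1} is m/(m+1)-tough; that is, writing n = 2m+1 for the order of G, the graph G is (n−1)/(n+1)-tough. -/
/-!
If a vertex set `S` misses a vertex `a` of `H` and a vertex `b` of `K̄_{m+1}`, then `G − S` is
connected, since every remaining vertex is joined to `a` directly or through `b`. So every cut `S`
contains one side of the join, whence `|S| ≥ m`. As `G − S` has at most `2m + 1 − |S|`
components `c`, we get `m c ≤ m (2m + 1 − |S|) ≤ (m + 1) |S|`, the last step being `|S| ≥ m`.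
-/

open SimpleGraph

/-- The number of connected components of `G − S`, the subgraph of `G` induced on the
complement of the vertex set `S`. -/
noncomputable def numComp {V : Type*} (G : SimpleGraph V) (S : Set V) : ℕ :=
  Nat.card (G.induce Sᶜ).ConnectedComponent

/-- A graph `G` is `t`-tough if `|S| ≥ t · c(G − S)` for every vertex set `S` whose removal
leaves at least two components. -/
def Tough {V : Type*} [Fintype V] (t : ℝ) (G : SimpleGraph V) : Prop :=
  ∀ S : Finset V, 2 ≤ numComp G (S : Set V) →
    t * (numComp G (S : Set V) : ℝ) ≤ (S.card : ℝ)

/-- The join `G₁ + G₂` of two graphs: the disjoint union of `G₁` and `G₂` together with all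
edges between the two vertex sets. -/
def graphJoin {α β : Type*} (G₁ : SimpleGraph α) (G₂ : SimpleGraph β) :
    SimpleGraph (α ⊕ β) :=
  SimpleGraph.fromRel (fun x y =>
    (∃ a b, x = Sum.inl a ∧ y = Sum.inl b ∧ G₁.Adj a b) ∨
    (∃ a b, x = Sum.inr a ∧ y = Sum.inr b ∧ G₂.Adj a b) ∨
    (∃ a b, x = Sum.inl a ∧ y = Sum.inr b))

section NumComp

variable {V : Type*} [Fintype V] (G : SimpleGraph V) (S : Finset V)

lemma numComp_add_card_le : numComp G (S : Set V) + S.card ≤ Fintype.card V := by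
  classical
  have hle : numComp G (S : Set V) ≤ Nat.card ↥(S : Set V)ᶜ :=
    Nat.card_le_card_of_surjective (G.induce _).connectedComponentMk
      (fun c => Quot.exists_rep c)
  rw [← Finset.coe_compl, Nat.card_coe_set_eq, Set.ncard_coe_finset, Finset.card_compl] at hle
  have := S.card_le_univ
  omega

lemma numComp_le_one_of_preconnected (h : (G.induce (S : Set V)ᶜ).Preconnected) :
    numComp G (S : Set V) ≤ 1 :=
  Finite.card_le_one_iff_subsingleton.mpr h.subsingleton_connectedComponent

theorem tough_of_le_card_of_two_le_numComp (k : ℕ)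
    (hk : ∀ S : Finset V, 2 ≤ numComp G (S : Set V) → k ≤ S.card) :
    Tough ((k : ℝ) / (Fintype.card V - k)) G := by
  intro S hS
  have hcut := numComp_add_card_le G S
  have hks := hk S hS
  have hpos : (0 : ℝ) < Fintype.card V - k := by
    rw [sub_pos]
    exact_mod_cast (by omega : k < Fintype.card V)
  have hcut' : (numComp G (S : Set V) : ℝ) + S.card ≤ Fintype.card V := by exact_mod_cast hcut
  have hks' : (k : ℝ) ≤ S.card := by exact_mod_cast hks
  rw [div_mul_eq_mul_div, div_le_iff₀ hpos]
  nlinarith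

end NumComp

section Join

variable {α β : Type*} (G₁ : SimpleGraph α) (G₂ : SimpleGraph β)

lemma graphJoin_adj_inl_inr (a : α) (b : β) : (graphJoin G₁ G₂).Adj (Sum.inl a) (Sum.inr b) := by
  rw [graphJoin, fromRel_adj]
  exact ⟨by simp, Or.inl (Or.inr (Or.inr ⟨a, b, rfl, rfl⟩))⟩

lemma graphJoin_induce_preconnected (s : Set (α ⊕ β)) {a : α} (ha : Sum.inl a ∈ s) {b : β}
    (hb : Sum.inr b ∈ s) : ((graphJoin G₁ G₂).induce s).Preconnected := by
  have reach_inl : ∀ (x : s) (a' : α) (h : Sum.inl a' ∈ s),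
      ((graphJoin G₁ G₂).induce s).Reachable x ⟨Sum.inl a', h⟩ := by
    rintro ⟨a₁ | b₁, hx⟩ a' h
    · have h₁ : ((graphJoin G₁ G₂).induce s).Adj ⟨Sum.inl a₁, hx⟩ ⟨Sum.inr b, hb⟩ :=
        graphJoin_adj_inl_inr G₁ G₂ a₁ b
      have h₂ : ((graphJoin G₁ G₂).induce s).Adj ⟨Sum.inr b, hb⟩ ⟨Sum.inl a', h⟩ :=
        (graphJoin_adj_inl_inr G₁ G₂ a' b).symm
      exact h₁.reachable.trans h₂.reachable
    · exact Adj.reachable (graphJoin_adj_inl_inr G₁ G₂ a' b₁).symm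
  rintro x ⟨a₂ | b₂, hy⟩
  · exact reach_inl x a₂ hy
  · exact (reach_inl x a ha).trans (reach_inl ⟨Sum.inr b₂, hy⟩ a ha).symm

lemma min_card_le_card_of_two_le_numComp_graphJoin [Fintype α] [Fintype β] (S : Finset (α ⊕ β))
    (hS : 2 ≤ numComp (graphJoin G₁ G₂) (S : Set (α ⊕ β))) :
    min (Fintype.card α) (Fintype.card β) ≤ S.card := by
  classical
  by_cases hα : ∀ a, Sum.inl a ∈ S
  · have : Finset.univ.map Function.Embedding.inl ⊆ S := by simpa [Finset.subset_iff]
    exact min_le_left _ _ |>.trans (by simpa using Finset.card_le_card this)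
  by_cases hβ : ∀ b, Sum.inr b ∈ S
  · have : Finset.univ.map Function.Embedding.inr ⊆ S := by simpa [Finset.subset_iff]
    exact min_le_right _ _ |>.trans (by simpa using Finset.card_le_card this)
  simp only [not_forall] at hα hβ
  obtain ⟨a, ha⟩ := hα
  obtain ⟨b, hb⟩ := hβ
  have := numComp_le_one_of_preconnected _ S
    (graphJoin_induce_preconnected G₁ G₂ (S : Set (α ⊕ β))ᶜ
      (Finset.mem_coe.not.mpr ha) (Finset.mem_coe.not.mpr hb))
  omega

end Join

theorem stmt7_general {α : Type*} [Fintype α] (m : ℕ)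
    (hcard : Fintype.card α = m) (H : SimpleGraph α) :
    Tough ((m : ℝ) / ((m : ℝ) + 1)) (graphJoin H (⊥ : SimpleGraph (Fin (m + 1)))) := by
  have hcut : ∀ S : Finset (α ⊕ Fin (m + 1)),
      2 ≤ numComp (graphJoin H ⊥) (S : Set (α ⊕ Fin (m + 1))) → m ≤ S.card := by
    intro S hS
    have := min_card_le_card_of_two_le_numComp_graphJoin H ⊥ S hS
    rw [hcard, Fintype.card_fin] at this
    omega
  have ht := tough_of_le_card_of_two_le_numComp (graphJoin H ⊥) m hcut
  rwa [Fintype.card_sum, hcard, Fintype.card_fin, Nat.cast_add, Nat.cast_add, Nat.cast_one,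
    show (m : ℝ) + (m + 1) - m = m + 1 by ring] at ht

/-- For any graph `H` on `m ≥ 1` vertices, the join `H + K̄_{m+1}` is `m/(m+1)`-tough,
i.e. `(n−1)/(n+1)`-tough where `n = 2m+1` is its order. -/
theorem stmt7 {α : Type*} [Fintype α] (m : ℕ) (hm : 1 ≤ m)
    (hcard : Fintype.card α = m) (H : SimpleGraph α) :
    Tough ((m : ℝ) / ((m : ℝ) + 1)) (graphJoin H (⊥ : SimpleGraph (Fin (m + 1)))) :=
  stmt7_general m hcard H
end

section
/- Let t > 0 be a real number and let G be a t-tough graph on n ≥ 3 vertices with σ₂(G) ≥ 2n/(t+1) − 2. If G is not 2-connected, then n = 3 and G is the path on 3 vertices (equivalently, G = K₁ + K̄₂). -/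
/-!
A graph that is not 2-connected has a cut vertex `v`, so `G - v` has at least two components
and `t`-toughness applied to `{v}` forces `t ≤ 1/2`. Two vertices `u, w` in different components
of `G - v` are nonadjacent and share no neighbour other than `v`, hence `d(u) + d(w) ≤ n - 1`.
Combined with `σ₂(G) ≥ 2n/(t+1) - 2` this gives `2n ≤ (n+1)(t+1) ≤ 3(n+1)/2`,
i.e. `n ≤ 3`.
Toughness with `S = ∅` makes `G` connected, and a connected graph on three vertices with a
nonadjacent pair is the path.
-/

open SimpleGraph

open Finset

namespace SimpleGraph

variable {V : Type*} {G : SimpleGraph V}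

lemma not_adj_of_not_reachable_induce {s : Set V} {u w : s}
    (h : ¬ (G.induce s).Reachable u w) : ¬ G.Adj u w :=
  fun hadj => h (Adj.reachable (by simpa using hadj))

lemma notMem_of_not_reachable_induce {s : Set V} {u w : s}
    (h : ¬ (G.induce s).Reachable u w) {x : V} (hux : G.Adj u x) (hxw : G.Adj x w) : x ∉ s :=
  fun hx => h ((Adj.reachable (G := G.induce s) (v := ⟨x, hx⟩) (by simpa using hux)).trans
    (Adj.reachable (by simpa using hxw)))

lemma two_le_numComp [Finite V] {s : Set V} {u w : ↥sᶜ} (h : ¬ (G.induce sᶜ).Reachable u w) :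
    2 ≤ numComp G s := by
  have : Nontrivial (G.induce sᶜ).ConnectedComponent :=
    nontrivial_of_ne _ _ (mt ConnectedComponent.eq.mp h)
  exact Finite.one_lt_card_iff_nontrivial.mpr this

lemma Preconnected.exists_adj (hG : G.Preconnected) {u x : V} (hux : u ≠ x) :
    ∃ y, G.Adj u y := by
  obtain ⟨p⟩ := hG u x
  exact ⟨p.getVert 1, p.adj_snd (Walk.not_nil_of_ne hux)⟩

section Fintype

variable [Fintype V] [DecidableEq V] [DecidableRel G.Adj]

lemma degree_add_degree_add_two_le {u w : V} (huw : u ≠ w) (hadj : ¬ G.Adj u w) :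
    G.degree u + G.degree w + 2 ≤
      Fintype.card V + #(G.neighborFinset u ∩ G.neighborFinset w) := by
  have hsub : G.neighborFinset u ∪ G.neighborFinset w ⊆ ({u, w} : Finset V)ᶜ := by
    intro x hx
    simp only [mem_union, mem_neighborFinset] at hx
    simp only [mem_compl, mem_insert, mem_singleton, not_or]
    constructor <;> rintro rfl
    · exact hx.elim G.irrefl (fun h => hadj h.symm)
    · exact hx.elim hadj G.irrefl
  have hunion := card_le_card hsub
  rw [card_compl, card_pair huw] at hunion
  have := card_union_add_card_inter (G.neighborFinset u) (G.neighborFinset w)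
  rw [card_neighborFinset_eq_degree, card_neighborFinset_eq_degree] at this
  have : 2 ≤ Fintype.card V := by
    simpa [card_pair huw] using card_le_univ ({u, w} : Finset V)
  omega

/-- Two vertices in different components of `G - v` have at most `v` as a common neighbour. -/
lemma degree_add_degree_add_one_le {v : V} {u w : ↥({v}ᶜ : Set V)}
    (h : ¬ (G.induce {v}ᶜ).Reachable u w) : G.degree u + G.degree w + 1 ≤ Fintype.card V := by
  have huw : (u : V) ≠ w := fun huw => h (by rw [Subtype.ext huw])
  have hcommon : G.neighborFinset u ∩ G.neighborFinset w ⊆ {v} := by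
    intro x hx
    simp only [mem_inter, mem_neighborFinset] at hx
    simpa using notMem_of_not_reachable_induce h hx.1 hx.2.symm
  have := card_le_card hcommon
  have := degree_add_degree_add_two_le huw (not_adj_of_not_reachable_induce h)
  simp only [card_singleton] at *
  omega

end Fintype

lemma nonempty_iso_pathGraph_three [Fintype V] (hV : Fintype.card V = 3) (hG : G.Preconnected)
    {u w : V} (huw : u ≠ w) (hadj : ¬ G.Adj u w) : Nonempty (G ≃g pathGraph 3) := by
  classical
  obtain ⟨v, -, hv⟩ := exists_mem_notMem_of_card_lt_card (s := {u, w}) (t := univ)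
    (by rw [card_pair huw, card_univ, hV]; norm_num)
  simp only [mem_insert, mem_singleton, not_or] at hv
  obtain ⟨hvu, hvw⟩ := hv
  have hmem : ∀ x, x = u ∨ x = v ∨ x = w := by
    intro x
    by_contra! hx
    have := card_le_univ ({x, u, v, w} : Finset V)
    rw [card_insert_of_notMem (by simp [hx.1, hx.2.1, hx.2.2]),
      card_insert_of_notMem (by simp [Ne.symm hvu, huw]), card_pair hvw, hV] at this
    omega
  have hwu : ¬ G.Adj w u := fun h => hadj h.symm
  have huv : G.Adj u v := by
    obtain ⟨y, hy⟩ := hG.exists_adj huw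
    obtain rfl | rfl | rfl := hmem y
    exacts [(G.irrefl hy).elim, hy, (hadj hy).elim]
  have hwv : G.Adj w v := by
    obtain ⟨y, hy⟩ := hG.exists_adj huw.symm
    obtain rfl | rfl | rfl := hmem y
    exacts [(hwu hy).elim, hy, (G.irrefl hy).elim]
  have hinj : Function.Injective ![u, v, w] := by
    intro i j h
    fin_cases i <;> fin_cases j <;> simp_all [eq_comm]
  let e := Equiv.ofBijective _
    ((Fintype.bijective_iff_injective_and_card _).mpr ⟨hinj, by simp [hV]⟩)
  refine ⟨(⟨e, ?_⟩ : pathGraph 3 ≃g G).symm⟩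
  intro i j
  fin_cases i <;> fin_cases j <;>
    simp [e, pathGraph_adj, huv, hwv, huv.symm, hwv.symm, hadj, hwu]

end SimpleGraph

lemma le_three_of_two_mul_div_sub_two_le {t n : ℝ} (ht₀ : 0 ≤ t) (ht : 2 * t ≤ 1)
    (h : 2 * n / (t + 1) - 2 ≤ n - 1) : n ≤ 3 := by
  have hpos : 0 < t + 1 := by linarith
  rw [div_sub' hpos.ne', div_le_iff₀ hpos] at h
  nlinarith

section Tough

variable {V : Type*} [Fintype V] {t : ℝ} {G : SimpleGraph V}

lemma Tough.two_mul_le_card (ht : 0 ≤ t) (hG : Tough t G) {S : Finset V}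
    (hS : 2 ≤ numComp G S) : 2 * t ≤ #S := by
  have := hG S hS
  have : (2 : ℝ) ≤ numComp G S := by exact_mod_cast hS
  nlinarith

lemma Tough.preconnected (ht : 0 < t) (hG : Tough t G) : G.Preconnected := by
  intro a b
  by_contra hab
  have h2 : 2 ≤ numComp G ((∅ : Finset V) : Set V) := by
    rw [coe_empty]
    exact SimpleGraph.two_le_numComp (u := ⟨a, by simp⟩) (w := ⟨b, by simp⟩)
      fun hr => hab (by simpa using hr.map (SimpleGraph.Embedding.induce _).toHom)
  have := hG.two_mul_le_card ht.le h2
  simp only [card_empty, CharP.cast_eq_zero] at this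
  linarith

end Tough

/-- If `G` is a `t`-tough graph on `n ≥ 3` vertices with `σ₂(G) ≥ 2n/(t+1) − 2` that is
not `2`-connected, then `n = 3` and `G` is the path on three vertices. -/
theorem stmt10 {V : Type*} [Fintype V] (t : ℝ) (ht : 0 < t) (G : SimpleGraph V)
    (hn : 3 ≤ Fintype.card V) (htough : Tough t G)
    (hsigma2 : ∀ u v : V, u ≠ v → ¬ G.Adj u v →
      2 * (Fintype.card V : ℝ) / (t + 1) - 2 ≤
        ((Nat.card (G.neighborSet u) + Nat.card (G.neighborSet v) : ℕ) : ℝ))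
    (hnot2conn : ¬ (3 ≤ Fintype.card V ∧ ∀ v : V, (G.induce {v}ᶜ).Connected)) :
    Fintype.card V = 3 ∧ Nonempty (G ≃g pathGraph 3) := by
  classical
  obtain ⟨v, hv⟩ : ∃ v, ¬ (G.induce {v}ᶜ).Connected := by
    by_contra! h
    exact hnot2conn ⟨hn, h⟩
  obtain ⟨u, w, huw⟩ : ∃ u w, ¬ (G.induce {v}ᶜ).Reachable u w := by
    obtain ⟨x, hx⟩ := Fintype.exists_ne_of_one_lt_card (by omega) v
    by_contra! h
    exact hv ((connected_iff _).mpr ⟨h, ⟨x, hx⟩⟩)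
  have ht2 : 2 * t ≤ 1 := by
    simpa using htough.two_mul_le_card ht.le (S := {v})
      (by rw [coe_singleton]; exact two_le_numComp huw)
  have hne : (u : V) ≠ w := fun h => huw (by rw [Subtype.ext h])
  have hnadj := not_adj_of_not_reachable_induce huw
  have hσ := hsigma2 u w hne hnadj
  simp only [Nat.card_eq_fintype_card, card_neighborSet_eq_degree] at hσ
  have hdeg : (G.degree u + G.degree w : ℝ) ≤ Fintype.card V - 1 := by
    have := degree_add_degree_add_one_le huw
    rw [le_sub_iff_add_le]
    exact_mod_cast this
  have hn3 : Fintype.card V = 3 := by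
    have := le_three_of_two_mul_div_sub_two_le ht.le ht2 (hσ.trans (by exact_mod_cast hdeg))
    exact le_antisymm (by exact_mod_cast this) hn
  exact ⟨hn3, nonempty_iso_pathGraph_three hn3 (htough.preconnected ht) hne hnadj⟩
end

section
/- Let t > 0 be a real number and let G be a noncomplete t-tough graph on n ≥ 3 vertices that is not hamiltonian. Then n ≥ (t+1)(2t+1). -/
/-!
Take a longest cycle `C` and a vertex `w` off it (`G` is not hamiltonian), let `H` be the
component of `w` in `G − C` and `S` the set of vertices of `C` with a neighbour in `H`.
Maximality of `C` forbids the successors on `C` of two vertices of `S` to be adjacent, and a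
successor of a vertex of `S` to have a neighbour in `H`. So `S` separates `w` from the
successors, giving `|S| ≥ 2t`, while the successors of `S` together with `w` form an independent
set `A` of size `|S| + 1`. Removing all vertices outside `A` leaves `|A|` components, so
`n − |A| ≥ t|A|`, i.e. `n ≥ (t + 1)|A| ≥ (t + 1)(2t + 1)`. For `t ≤ 1/2` the bound is `n ≥ 3`.
-/

open SimpleGraph

section

variable {V : Type*} {G : SimpleGraph V}

section Components

theorem two_le_numComp_of_closed [Finite V] {S H : Set V}
    (hH : ∀ a ∈ H, ∀ b, G.Adj a b → b ∈ H ∨ b ∈ S) {x y : V}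
    (hx : x ∈ H) (hxS : x ∉ S) (hy : y ∉ H) (hyS : y ∉ S) : 2 ≤ numComp G S := by
  have hstay : ∀ {a b : ↥Sᶜ} (q : (G.induce Sᶜ).Walk a b), a.1 ∈ H → b.1 ∈ H := by
    intro a b q
    induction q with
    | nil => exact id
    | @cons _ c _ h _ ih => exact fun ha => ih ((hH _ ha _ h).resolve_right c.2)
  have hne : (G.induce Sᶜ).connectedComponentMk ⟨x, hxS⟩ ≠
      (G.induce Sᶜ).connectedComponentMk ⟨y, hyS⟩ :=
    fun h => hy (hstay (ConnectedComponent.exact h).some hx)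
  exact Finite.one_lt_card_iff_nontrivial.2 ⟨_, _, hne⟩

theorem card_le_numComp_compl [Fintype V] [DecidableEq V] {A : Finset V}
    (hA : G.IsIndepSet A) : A.card ≤ numComp G ↑Aᶜ := by
  rw [numComp, Finset.coe_compl, compl_compl]
  have hinj : Function.Injective (G.induce (A : Set V)).connectedComponentMk := by
    intro x y hxy
    obtain ⟨q⟩ := ConnectedComponent.exact hxy
    cases q with
    | nil => rfl
    | cons h _ => exact absurd h (hA x.2 (Subtype.prop _) (Subtype.coe_ne_coe.2 h.ne))
  simpa using Nat.card_le_card_of_injective _ hinj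

end Components

namespace Tough

variable [Fintype V] {t : ℝ}

theorem two_mul_le_card_s11 (hG : Tough t G) (ht : 0 ≤ t) {S : Finset V}
    (hS : 2 ≤ numComp G S) : 2 * t ≤ S.card := by
  have h2 : t * 2 ≤ t * numComp G S := by gcongr; exact_mod_cast hS
  linarith [hG S hS]

theorem preconnected_s11 (hG : Tough t G) (ht : 0 < t) : G.Preconnected := by
  intro x y
  by_contra hxy
  have hsep : 2 ≤ numComp G ((∅ : Finset V) : Set V) :=
    two_le_numComp_of_closed (H := {z | G.Reachable x z})
      (fun _ ha _ hab => Or.inl (ha.trans hab.reachable)) (Reachable.refl x) (by simp) hxy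
      (by simp)
  have := hG.two_mul_le_card_s11 ht.le hsep
  simp only [Finset.card_empty, Nat.cast_zero] at this
  linarith

theorem two_mul_le_degree [DecidableRel G.Adj] (hG : Tough t G) (ht : 0 ≤ t) {v y : V}
    (hyv : y ≠ v) (hvy : ¬ G.Adj v y) : 2 * t ≤ G.degree v := by
  rw [← card_neighborFinset_eq_degree]
  refine hG.two_mul_le_card_s11 ht (two_le_numComp_of_closed (H := {v}) (x := v) (y := y) ?_
    rfl (by simp) hyv (by simpa using hvy))
  rintro a rfl b hab
  exact Or.inr (by simpa using hab)

theorem exists_isCycle (hG : Tough t G) (ht : 1 / 2 < t) (hn : 3 ≤ Fintype.card V) :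
    ∃ (v : V) (p : G.Walk v v), p.IsCycle := by
  classical
  by_contra! hacyclic
  have : Nontrivial V := Fintype.one_lt_card_iff_nontrivial.1 (by omega)
  have htree : G.IsTree :=
    ⟨⟨hG.preconnected_s11 (by linarith)⟩, fun v c hc => hacyclic v c hc⟩
  obtain ⟨v, hv⟩ := htree.exists_vert_degree_one_of_nontrivial
  obtain ⟨y, -, hy⟩ := Finset.exists_mem_notMem_of_card_lt_card
    (s := insert v (G.neighborFinset v)) (t := Finset.univ) <| by
      have := Finset.card_insert_le v (G.neighborFinset v)
      rw [card_neighborFinset_eq_degree, hv] at this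
      rw [Finset.card_univ]
      omega
  simp only [Finset.mem_insert, mem_neighborFinset, not_or] at hy
  have := hG.two_mul_le_degree (by linarith) hy.1 hy.2
  rw [hv, Nat.cast_one] at this
  linarith

theorem add_one_mul_card_le [DecidableEq V] (hG : Tough t G) (ht : 0 ≤ t) {A : Finset V}
    (hA : G.IsIndepSet A) (hA2 : 2 ≤ A.card) : (t + 1) * A.card ≤ Fintype.card V := by
  have hcomp := card_le_numComp_compl hA
  have hcompl : ((Aᶜ).card : ℝ) = Fintype.card V - A.card := by
    rw [Finset.card_compl, Nat.cast_sub (Finset.card_le_univ A)]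
  have : t * A.card ≤ t * numComp G ↑Aᶜ := by gcongr
  linarith [hG Aᶜ (hA2.trans hcomp)]

end Tough

namespace SimpleGraph.Walk

variable {u v w : V}

theorem IsCycle.length_le_card [Fintype V] {p : G.Walk v v} (hp : p.IsCycle) :
    p.length ≤ Fintype.card V := by
  have := hp.isPath_tail.length_lt
  rw [length_tail] at this
  omega

theorem IsCycle.exists_notMem_support [Fintype V] [DecidableEq V] {p : G.Walk v v}
    (hp : p.IsCycle) (hG : ¬ G.IsHamiltonian) : ∃ w, w ∉ p.support := by
  by_contra! hall
  refine hG fun _ => ⟨v, p, isHamiltonianCycle_isCycle_and_isHamiltonian_tail.2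
    ⟨hp, hp.isPath_tail.isHamiltonian_of_mem fun w => ?_⟩⟩
  rw [support_tail_of_not_nil _ hp.not_nil]
  rcases p.mem_support_iff.1 (hall w) with rfl | hw
  · exact end_mem_tail_support hp.not_nil
  · exact hw

structure IsLongestCycle (p : G.Walk v v) : Prop where
  isCycle : p.IsCycle
  length_le : ∀ ⦃u : V⦄ (c : G.Walk u u), c.IsCycle → c.length ≤ p.length

theorem exists_isLongestCycle [Fintype V] (h : ∃ (v : V) (p : G.Walk v v), p.IsCycle) :
    ∃ (v : V) (p : G.Walk v v), p.IsLongestCycle := by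
  obtain ⟨v, p, hp⟩ := h
  let lengths := {n | ∃ (u : V) (c : G.Walk u u), c.IsCycle ∧ c.length = n}
  have hfin : lengths.Finite := (Set.finite_le_nat (Fintype.card V)).subset
    fun _ ⟨_, _, hc, hn⟩ => hn ▸ hc.length_le_card
  obtain ⟨_, ⟨u, c, hc, rfl⟩, hmax⟩ := hfin.exists_maximal ⟨_, v, p, hp, rfl⟩
  refine ⟨u, c, hc, fun u' c' hc' => ?_⟩
  have := hmax ⟨u', c', hc', rfl⟩
  omega

theorem IsCycle.injOn_fst_darts {p : G.Walk v v} (hp : p.IsCycle) :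
    Set.InjOn (·.fst) {d | d ∈ p.darts} :=
  List.inj_on_of_nodup_map (p.map_fst_darts ▸ hp.nodup_dropLast_support)

theorem IsCycle.injOn_snd_darts {p : G.Walk v v} (hp : p.IsCycle) :
    Set.InjOn (·.snd) {d | d ∈ p.darts} :=
  List.inj_on_of_nodup_map (p.map_snd_darts ▸ hp.support_nodup)

theorem IsPath.exists_posaRotation {x m : V} {q₁ : G.Walk x m} {q₂ : G.Walk m u}
    (hq : (q₁.append q₂).IsPath) (hq₂ : ¬ q₂.Nil) (hx : G.Adj x q₂.snd) :
    ∃ r : G.Walk m u, r.IsPath ∧ r.length = (q₁.append q₂).length ∧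
      ∀ z ∈ r.support, z ∈ (q₁.append q₂).support := by
  have hsupp : (q₁.reverse.append (cons hx q₂.tail)).support =
      q₁.support.reverse ++ q₂.support.tail := by
    rw [support_append, support_reverse, support_cons, List.tail_cons,
      support_tail_of_not_nil _ hq₂]
  have hperm : (q₁.reverse.append (cons hx q₂.tail)).support.Perm (q₁.append q₂).support := by
    rw [hsupp, support_append]
    exact (List.reverse_perm _).append_right _
  refine ⟨q₁.reverse.append (cons hx q₂.tail), IsPath.mk' (hperm.nodup_iff.2 hq.support_nodup),
    ?_, fun z hz => hperm.mem_iff.1 hz⟩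
  rw [length_append, length_append, length_reverse, length_cons, length_tail_add_one hq₂]

variable [DecidableEq V]

/-- The vertex following `u` on the closed walk `p` (`u` itself if `u` is not on `p`). -/
def cycleSucc (p : G.Walk v v) (u : V) : V :=
  if hu : u ∈ p.support then (p.rotate u hu).snd else u

theorem cycleSucc_eq {p : G.Walk v v} (hu : u ∈ p.support) :
    p.cycleSucc u = (p.rotate u hu).snd :=
  dif_pos hu

theorem IsCycle.exists_dart_cycleSucc {p : G.Walk v v} (hp : p.IsCycle) (hu : u ∈ p.support) :
    ∃ d ∈ p.darts, d.fst = u ∧ d.snd = p.cycleSucc u :=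
  ⟨_, (rotate_darts p u hu).perm.mem_iff.1 (firstDart_mem_darts (hp.rotate hu).not_nil),
    rfl, (cycleSucc_eq hu).symm⟩

theorem IsCycle.cycleSucc_fst {p : G.Walk v v} (hp : p.IsCycle) {d : G.Dart}
    (hd : d ∈ p.darts) : p.cycleSucc d.fst = d.snd := by
  obtain ⟨d', hd', hfst, hsnd⟩ :=
    hp.exists_dart_cycleSucc (p.dart_fst_mem_support_of_mem_darts hd)
  rw [← hsnd, hp.injOn_fst_darts hd' hd hfst]

theorem IsCycle.cycleSucc_mem_support {p : G.Walk v v} (hp : p.IsCycle) (hu : u ∈ p.support) :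
    p.cycleSucc u ∈ p.support := by
  obtain ⟨d, hd, -, hsnd⟩ := hp.exists_dart_cycleSucc hu
  exact hsnd ▸ p.dart_snd_mem_support_of_mem_darts hd

theorem IsCycle.injOn_cycleSucc {p : G.Walk v v} (hp : p.IsCycle) :
    Set.InjOn p.cycleSucc {u | u ∈ p.support} := by
  intro u₁ hu₁ u₂ hu₂ h
  obtain ⟨d₁, hd₁, rfl, hsnd₁⟩ := hp.exists_dart_cycleSucc hu₁
  obtain ⟨d₂, hd₂, rfl, hsnd₂⟩ := hp.exists_dart_cycleSucc hu₂
  rw [hp.injOn_snd_darts hd₁ hd₂ (hsnd₁.trans (h.trans hsnd₂.symm))]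

theorem IsCycle.exists_isPath_cycleSucc {p : G.Walk v v} (hp : p.IsCycle) (hu : u ∈ p.support) :
    ∃ q : G.Walk (p.cycleSucc u) u, q.IsPath ∧ q.length + 1 = p.length ∧
      (∀ z, z ∈ q.support ↔ z ∈ p.support) ∧ q.darts ⊆ p.darts := by
  have hnil := (hp.rotate hu).not_nil
  rw [cycleSucc_eq hu]
  refine ⟨_, (hp.rotate hu).isPath_tail, ?_, fun z => ?_, fun d hd => ?_⟩
  · rw [length_tail_add_one hnil, length_rotate]
  · rw [← mem_support_rotate_iff p u hu, ← cons_support_tail hnil, List.mem_cons]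
    refine (or_iff_right_of_imp fun hz => ?_).symm
    rw [hz]
    exact end_mem_support _
  · rw [darts_tail] at hd
    exact (rotate_darts p u hu).perm.mem_iff.1 (List.mem_of_mem_tail hd)

theorem exists_isCycle_of_detour {y a b : V} {inner : G.Walk y u} (hinner : inner.IsPath)
    (hnil : ¬ inner.Nil) (P : G.Walk a b) (hP : ∀ z ∈ P.support, z ∉ inner.support)
    (hua : G.Adj u a) (hby : G.Adj b y) :
    ∃ c : G.Walk u u, c.IsCycle ∧ inner.length + 2 ≤ c.length := by
  have hP' : ∀ z ∈ P.bypass.support, z ∉ inner.support :=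
    fun z hz => hP z (support_bypass_subset_support P hz)
  refine ⟨(cons hua P.bypass).append (cons hby inner), IsPath.isCycle_append ?_ ?_ ?_ ?_, ?_⟩
  · exact (bypass_isPath P).cons fun hu => hP' u hu inner.end_mem_support
  · exact hinner.cons fun hb => hP' b P.bypass.end_mem_support hb
  · simpa [support_cons, List.disjoint_left] using hP'
  · have := not_nil_iff_lt_length.1 hnil
    right
    rw [length_cons]
    omega
  · simp only [length_append, length_cons]
    omega

theorem IsLongestCycle.not_adj_cycleSucc {p : G.Walk v v} (hp : p.IsLongestCycle) {a b : V}
    (hu : u ∈ p.support) (P : G.Walk a b) (hP : ∀ z ∈ P.support, z ∉ p.support)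
    (ha : G.Adj u a) : ¬ G.Adj (p.cycleSucc u) b := by
  intro hb
  obtain ⟨q, hq, hlen, hsupp, -⟩ := hp.isCycle.exists_isPath_cycleSucc hu
  have hnil : ¬ q.Nil := by
    have := hp.isCycle.three_le_length
    rw [← length_eq_zero_iff]
    omega
  obtain ⟨c, hc, hclen⟩ := exists_isCycle_of_detour hq hnil P
    (fun z hz hzq => hP z hz ((hsupp z).1 hzq)) ha hb.symm
  have := hp.length_le c hc
  omega

theorem IsLongestCycle.not_adj_cycleSucc_cycleSucc {p : G.Walk v v} (hp : p.IsLongestCycle)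
    {u₁ u₂ a b : V} (hu₁ : u₁ ∈ p.support) (hu₂ : u₂ ∈ p.support) (hne : u₁ ≠ u₂)
    (P : G.Walk a b) (hP : ∀ z ∈ P.support, z ∉ p.support)
    (ha : G.Adj u₁ a) (hb : G.Adj u₂ b) : ¬ G.Adj (p.cycleSucc u₁) (p.cycleSucc u₂) := by
  intro hadj
  obtain ⟨q, hq, hlen, hsupp, hdarts⟩ := hp.isCycle.exists_isPath_cycleSucc hu₁
  have hu₂q : u₂ ∈ q.support := (hsupp u₂).2 hu₂
  have hsplit := q.take_spec hu₂q
  have hnil : ¬ (q.dropUntil u₂ hu₂q).Nil := not_nil_of_ne hne.symm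
  have hsnd : p.cycleSucc u₂ = (q.dropUntil u₂ hu₂q).snd :=
    hp.isCycle.cycleSucc_fst (d := (q.dropUntil u₂ hu₂q).firstDart hnil)
      (hdarts (darts_dropUntil_subset_darts q hu₂q (firstDart_mem_darts hnil)))
  rw [hsnd] at hadj
  -- the longer cycle: `u₁`, `P`, `u₂`, back along `p` to `succ u₁`, across to `succ u₂`, on to `u₁`
  obtain ⟨r, hr, hrlen, hrsupp⟩ := (hsplit ▸ hq).exists_posaRotation hnil hadj
  rw [hsplit] at hrlen hrsupp
  obtain ⟨c, hc, hclen⟩ := exists_isCycle_of_detour hr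
    (not_nil_of_ne hne.symm) P (fun z hz hzr => hP z hz ((hsupp z).1 (hrsupp z hzr))) ha hb.symm
  have := hp.length_le c hc
  omega

end SimpleGraph.Walk

namespace SimpleGraph

variable {u v w : V}

def reachAvoiding (G : SimpleGraph V) (X : Set V) (w : V) : Set V :=
  {y | ∃ q : G.Walk w y, ∀ z ∈ q.support, z ∉ X}

section reachAvoiding

variable {X : Set V}

theorem mem_reachAvoiding_self (hw : w ∉ X) : w ∈ G.reachAvoiding X w :=
  ⟨.nil, by simpa using hw⟩

theorem notMem_of_mem_reachAvoiding {y : V} (hy : y ∈ G.reachAvoiding X w) : y ∉ X := by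
  obtain ⟨q, hq⟩ := hy
  exact hq y q.end_mem_support

theorem mem_reachAvoiding_of_adj {y z : V} (hy : y ∈ G.reachAvoiding X w) (hyz : G.Adj y z)
    (hz : z ∉ X) : z ∈ G.reachAvoiding X w := by
  obtain ⟨q, hq⟩ := hy
  refine ⟨q.concat hyz, fun a ha => ?_⟩
  rw [Walk.support_concat, List.mem_append, List.mem_singleton] at ha
  rcases ha with ha | rfl
  exacts [hq a ha, hz]

theorem exists_walk_of_mem_reachAvoiding {y z : V} (hy : y ∈ G.reachAvoiding X w)
    (hz : z ∈ G.reachAvoiding X w) : ∃ P : G.Walk y z, ∀ a ∈ P.support, a ∉ X := by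
  obtain ⟨qy, hqy⟩ := hy
  obtain ⟨qz, hqz⟩ := hz
  refine ⟨qy.reverse.append qz, fun a ha => ?_⟩
  rcases (Walk.mem_support_append_iff _ _).1 ha with ha | ha
  exacts [hqy a (by simpa using ha), hqz a ha]

end reachAvoiding

noncomputable def attachments [Fintype V] (p : G.Walk v v) (w : V) : Finset V := by
  classical
  exact Finset.univ.filter fun u =>
    u ∈ p.support ∧ ∃ h ∈ G.reachAvoiding {z | z ∈ p.support} w, G.Adj u h

theorem mem_attachments [Fintype V] {p : G.Walk v v} :
    u ∈ attachments p w ↔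
      u ∈ p.support ∧ ∃ h ∈ G.reachAvoiding {z | z ∈ p.support} w, G.Adj u h := by
  classical
  simp [attachments]

namespace Walk

variable [Fintype V] [DecidableEq V] {p : G.Walk v v}

theorem IsCycle.card_insert_image_cycleSucc (hp : p.IsCycle) (hw : w ∉ p.support) :
    (insert w ((attachments p w).image p.cycleSucc)).card = (attachments p w).card + 1 := by
  rw [Finset.card_insert_of_notMem, Finset.card_image_of_injOn
    (hp.injOn_cycleSucc.mono fun u hu => (mem_attachments.1 hu).1)]
  intro hw'
  obtain ⟨u, hu, rfl⟩ := Finset.mem_image.1 hw'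
  exact hw (hp.cycleSucc_mem_support (mem_attachments.1 hu).1)

theorem IsLongestCycle.cycleSucc_notMem_attachments (hp : p.IsLongestCycle)
    (hu : u ∈ attachments p w) : p.cycleSucc u ∉ attachments p w := by
  intro hsu
  obtain ⟨hu, a, ha, hua⟩ := mem_attachments.1 hu
  obtain ⟨-, b, hb, hsb⟩ := mem_attachments.1 hsu
  obtain ⟨P, hP⟩ := exists_walk_of_mem_reachAvoiding ha hb
  exact hp.not_adj_cycleSucc hu P hP hua hsb

theorem IsLongestCycle.two_le_numComp_attachments (hp : p.IsLongestCycle) (hw : w ∉ p.support)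
    (hconn : G.Preconnected) : 2 ≤ numComp G (attachments p w) := by
  set H := G.reachAvoiding {z | z ∈ p.support} w
  have hclosed : ∀ a ∈ H, ∀ b, G.Adj a b → b ∈ H ∨ b ∈ (attachments p w : Set V) := by
    intro a ha b hab
    by_cases hb : b ∈ p.support
    · exact Or.inr (mem_attachments.2 ⟨hb, a, ha, hab.symm⟩)
    · exact Or.inl (mem_reachAvoiding_of_adj ha hab hb)
  have hwH : w ∈ H := mem_reachAvoiding_self hw
  obtain ⟨d, -, hd₁, hd₂⟩ := (hconn w v).some.exists_boundary_dart H hwH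
    fun hv => notMem_of_mem_reachAvoiding hv p.start_mem_support
  have hu : d.snd ∈ attachments p w := (hclosed _ hd₁ _ d.adj).resolve_left hd₂
  have hsucc := hp.isCycle.cycleSucc_mem_support (mem_attachments.1 hu).1
  exact two_le_numComp_of_closed hclosed hwH (fun h => hw (mem_attachments.1 h).1)
    (fun h => notMem_of_mem_reachAvoiding h hsucc) (hp.cycleSucc_notMem_attachments hu)

theorem IsLongestCycle.isIndepSet_insert_image_cycleSucc (hp : p.IsLongestCycle)
    (hw : w ∉ p.support) :
    G.IsIndepSet ↑(insert w ((attachments p w).image p.cycleSucc)) := by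
  have hS : ∀ u ∈ attachments p w, u ∈ p.support := fun u hu => (mem_attachments.1 hu).1
  have hwS : ∀ u ∈ attachments p w, ¬ G.Adj w (p.cycleSucc u) := fun u hu hadj =>
    hp.cycleSucc_notMem_attachments hu (mem_attachments.2
      ⟨hp.isCycle.cycleSucc_mem_support (hS u hu), w, mem_reachAvoiding_self hw, hadj.symm⟩)
  rw [Finset.coe_insert, Finset.coe_image, isIndepSet_iff, Set.pairwise_insert,
    (hp.isCycle.injOn_cycleSucc.mono hS).pairwise_image]
  refine ⟨fun u₁ hu₁ u₂ hu₂ hne => ?_, ?_⟩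
  · obtain ⟨hu₁, a, ha, hua⟩ := mem_attachments.1 hu₁
    obtain ⟨hu₂, b, hb, hub⟩ := mem_attachments.1 hu₂
    obtain ⟨P, hP⟩ := exists_walk_of_mem_reachAvoiding ha hb
    exact hp.not_adj_cycleSucc_cycleSucc hu₁ hu₂ hne P hP hua hub
  · rintro _ ⟨u, hu, rfl⟩ -
    exact ⟨hwS u hu, fun h => hwS u hu h.symm⟩

end Walk

end SimpleGraph

end

theorem stmt11_general {V : Type*} [Fintype V] [DecidableEq V] (t : ℝ) (ht : 0 < t)
    (G : SimpleGraph V) (hn : 3 ≤ Fintype.card V) (htough : Tough t G)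
    (hnh : ¬ G.IsHamiltonian) :
    (t + 1) * (2 * t + 1) ≤ (Fintype.card V : ℝ) := by
  rcases le_or_gt t (1 / 2) with hsmall | hbig
  · have : (3 : ℝ) ≤ Fintype.card V := by exact_mod_cast hn
    nlinarith
  obtain ⟨v, p, hp⟩ := Walk.exists_isLongestCycle (htough.exists_isCycle hbig hn)
  obtain ⟨w, hw⟩ := hp.isCycle.exists_notMem_support hnh
  set A := insert w ((attachments p w).image p.cycleSucc)
  have hS := htough.two_mul_le_card_s11 ht.le
    (hp.two_le_numComp_attachments hw (htough.preconnected_s11 ht))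
  have hA : 2 * t + 1 ≤ A.card := by
    rw [hp.isCycle.card_insert_image_cycleSucc hw]
    push_cast
    linarith
  have hA2 : 2 ≤ A.card := by exact_mod_cast (by linarith : (2 : ℝ) ≤ A.card)
  calc (t + 1) * (2 * t + 1) ≤ (t + 1) * A.card := by gcongr
    _ ≤ Fintype.card V :=
      htough.add_one_mul_card_le ht.le (hp.isIndepSet_insert_image_cycleSucc hw) hA2

/-- A noncomplete `t`-tough graph on `n ≥ 3` vertices that is not hamiltonian satisfies
`n ≥ (t+1)(2t+1)`. -/
theorem stmt11 {V : Type*} [Fintype V] [DecidableEq V] (t : ℝ) (ht : 0 < t)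
    (G : SimpleGraph V) (hnc : G ≠ ⊤) (hn : 3 ≤ Fintype.card V) (htough : Tough t G)
    (hnh : ¬ G.IsHamiltonian) :
    (t + 1) * (2 * t + 1) ≤ (Fintype.card V : ℝ) :=
  stmt11_general t ht G hn htough hnh
end
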